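/- Let 0 < δ₀ ≤ 10^{−10} and γ ∈ 𝔊₃(δ₀). Let ξ ∈ ℝ³, ξ ≠ 0, satisfy ξ₃ ≥ (9/10)|ξ| and |ξ_j| ≤ 8 δ₀ |ξ| for j = 1, 2; let θ₂(ξ) ∈ [−1,1] be the unique solution of ⟨γ''(s), ξ⟩ = 0 in [−1,1], and set u(ξ) := ⟨γ'(θ₂(ξ)), ξ⟩. Then: (i) if u(ξ) > 0, the equation ⟨γ'(s), ξ⟩ = 0 has no solution s ∈ [−1,1]; (ii) if u(ξ) = 0, its only solution in [−1,1] is s = θ₂(ξ); (iii) if u(ξ) < 0, it has exactly two solutions in [−1,1], and each solution s satisfies |s| ≤ 36 δ₀^{1/2}. -/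

import Mathlib

open MeasureTheory Real Set
open scoped InnerProductSpace ENNReal NNReal

noncomputable section

/-- The moment curve `γ∘(s) = (s, s²/2, s³/6)` in `ℝ³`. -/
def momentCurve (s : ℝ) : EuclideanSpace ℝ (Fin 3) :=
  (EuclideanSpace.equiv (Fin 3) ℝ).symm ![s, s ^ 2 / 2, s ^ 3 / 6]

/-!
Write `g(s) = ⟪γ'(s), ξ⟫`. Since `γ''' ≈ e₃` and `ξ` is nearly parallel to `e₃`, `g'' ≈ ξ₃ > 0` on
`[-1, 1]`, so `g' = ⟪γ'', ξ⟫` is strictly increasing and vanishes only at `θ₂`. Hence `g` strictly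
decreases on `[-1, θ₂]` and strictly increases on `[θ₂, 1]`, which gives (i), (ii) and at most one
zero on each side of `θ₂` in (iii). Comparing with the moment curve,
`g(s) ≥ ξ₁ + s ξ₂ + s² ξ₃ / 2 - δ₀ |ξ| ≥ (0.45 s² - 17 δ₀) |ξ|`, which is positive once
`|s| ≥ 36 √δ₀`; so in case (iii) `θ₂` lies in `(-36 √δ₀, 36 √δ₀)` and the intermediate value
theorem puts one zero in each of `[-36 √δ₀, θ₂]` and `[θ₂, 36 √δ₀]`.
-/

theorem strictAntiOn_strictMonoOn_of_hasDerivAt {f f' : ℝ → ℝ} {a b θ : ℝ}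
    (hf : ∀ x ∈ Icc a b, HasDerivAt f (f' x) x) (hf' : StrictMonoOn f' (Icc a b))
    (hθ : θ ∈ Icc a b) (hθ0 : f' θ = 0) :
    StrictAntiOn f (Icc a θ) ∧ StrictMonoOn f (Icc θ b) := by
  have hcont : ContinuousOn f (Icc a b) := fun x hx => (hf x hx).continuousAt.continuousWithinAt
  constructor
  · refine strictAntiOn_of_hasDerivWithinAt_neg (f' := f') (convex_Icc a θ)
      (hcont.mono (Icc_subset_Icc_right hθ.2)) (fun x hx => ?_) (fun x hx => ?_) <;>
      rw [interior_Icc] at hx <;> have hx' : x ∈ Icc a b := ⟨hx.1.le, hx.2.le.trans hθ.2⟩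
    · exact (hf x hx').hasDerivWithinAt
    · exact hθ0 ▸ hf' hx' hθ hx.2
  · refine strictMonoOn_of_hasDerivWithinAt_pos (f' := f') (convex_Icc θ b)
      (hcont.mono (Icc_subset_Icc_left hθ.1)) (fun x hx => ?_) (fun x hx => ?_) <;>
      rw [interior_Icc] at hx <;> have hx' : x ∈ Icc a b := ⟨hθ.1.trans hx.1.le, hx.2.le⟩
    · exact (hf x hx').hasDerivWithinAt
    · exact hθ0 ▸ hf' hθ hx' hx.1

section Valley

variable {f : ℝ → ℝ} {a b θ : ℝ}

theorem lt_apply_of_strictAntiOn_of_strictMonoOn (hanti : StrictAntiOn f (Icc a θ))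
    (hmono : StrictMonoOn f (Icc θ b)) (hθ : θ ∈ Icc a b) {s : ℝ} (hs : s ∈ Icc a b)
    (hne : s ≠ θ) : f θ < f s := by
  rcases hne.lt_or_gt with h | h
  · exact hanti ⟨hs.1, h.le⟩ ⟨hθ.1, le_rfl⟩ h
  · exact hmono ⟨le_rfl, hθ.2⟩ ⟨h.le, hs.2⟩ h

theorem exists_two_zeros_of_strictAntiOn_of_strictMonoOn (hanti : StrictAntiOn f (Icc a θ))
    (hmono : StrictMonoOn f (Icc θ b)) (hcont : ContinuousOn f (Icc a b)) {p q : ℝ}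
    (hp : p ∈ Icc a θ) (hq : q ∈ Icc θ b) (hθ : f θ < 0) (hfp : 0 < f p) (hfq : 0 < f q) :
    ∃ s₁ ∈ Icc p θ, ∃ s₂ ∈ Icc θ q, s₁ ≠ s₂ ∧ f s₁ = 0 ∧ f s₂ = 0 ∧
      ∀ s ∈ Icc a b, f s = 0 → s = s₁ ∨ s = s₂ := by
  obtain ⟨s₁, hs₁, h₁⟩ : (0 : ℝ) ∈ f '' Icc p θ :=
    intermediate_value_Icc' hp.2 (hcont.mono (Icc_subset_Icc hp.1 (hq.1.trans hq.2)))
      ⟨hθ.le, hfp.le⟩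
  obtain ⟨s₂, hs₂, h₂⟩ : (0 : ℝ) ∈ f '' Icc θ q :=
    intermediate_value_Icc hq.1 (hcont.mono (Icc_subset_Icc (hp.1.trans hp.2) hq.2))
      ⟨hθ.le, hfq.le⟩
  have hne : ∀ s, f s = 0 → s ≠ θ := fun s hs h => hθ.ne (h ▸ hs)
  have hs₁θ : s₁ < θ := hs₁.2.lt_of_ne (hne s₁ h₁)
  have hθs₂ : θ < s₂ := hs₂.1.lt_of_ne (hne s₂ h₂).symm
  refine ⟨s₁, hs₁, s₂, hs₂, (hs₁θ.trans hθs₂).ne, h₁, h₂, fun s hs h => ?_⟩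
  rcases (hne s h).lt_or_gt with hsθ | hθs
  · exact .inl (hanti.injOn ⟨hs.1, hsθ.le⟩ ⟨hp.1.trans hs₁.1, hs₁.2⟩ (h.trans h₁.symm))
  · exact .inr (hmono.injOn ⟨hθs.le, hs.2⟩ ⟨hs₂.1, hs₂.2.trans hq.2⟩ (h.trans h₂.symm))

end Valley

theorem hasDerivAt_inner_iteratedDeriv {E : Type*} [NormedAddCommGroup E]
    [InnerProductSpace ℝ E] {γ : ℝ → E} {n : WithTop ℕ∞} (hγ : ContDiff ℝ n γ) {k : ℕ}
    (hk : k < n) (ξ : E) (s : ℝ) :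
    HasDerivAt (fun t => ⟪iteratedDeriv k γ t, ξ⟫_ℝ) ⟪iteratedDeriv (k + 1) γ s, ξ⟫_ℝ s := by
  rw [iteratedDeriv_succ]
  simpa using ((hγ.differentiable_iteratedDeriv k hk).differentiableAt.hasDerivAt).inner ℝ
    (hasDerivAt_const s ξ)

theorem abs_inner_sub_inner_le {E : Type*} [NormedAddCommGroup E] [InnerProductSpace ℝ E]
    {u v : E} {δ : ℝ} (h : ‖u - v‖ ≤ δ) (ξ : E) : |⟪u, ξ⟫_ℝ - ⟪v, ξ⟫_ℝ| ≤ δ * ‖ξ‖ := by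
  rw [← inner_sub_left]
  exact (abs_real_inner_le_norm _ _).trans (mul_le_mul_of_nonneg_right h (norm_nonneg _))

section MomentCurve

open EuclideanSpace

theorem momentCurve_eq :
    momentCurve = fun s =>
      s • single 0 1 + (s ^ 2 / 2) • single 1 1 + (s ^ 3 / 6) • single 2 1 := by
  ext s i
  fin_cases i <;> simp [momentCurve]

theorem iteratedDeriv_one_momentCurve :
    iteratedDeriv 1 momentCurve =
      fun s => single 0 1 + s • single 1 1 + (s ^ 2 / 2) • single 2 1 := by
  ext1 s
  have h₂ : HasDerivAt (fun t : ℝ => t ^ 2 / 2) s s := by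
    simpa using (hasDerivAt_pow 2 s).div_const 2
  have h₃ : HasDerivAt (fun t : ℝ => t ^ 3 / 6) (s ^ 2 / 2) s :=
    ((hasDerivAt_pow 3 s).div_const 6).congr_deriv (by norm_num; ring)
  rw [iteratedDeriv_one, momentCurve_eq]
  exact ((((hasDerivAt_id s).smul_const _).add (h₂.smul_const _)).add
    (h₃.smul_const _)).deriv.trans (by simp)

theorem iteratedDeriv_two_momentCurve :
    iteratedDeriv 2 momentCurve = fun s => single 1 1 + s • single 2 1 := by
  ext1 s
  have h₂ : HasDerivAt (fun t : ℝ => t ^ 2 / 2) s s := by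
    simpa using (hasDerivAt_pow 2 s).div_const 2
  rw [iteratedDeriv_succ, iteratedDeriv_one_momentCurve]
  exact ((((hasDerivAt_const s _).add ((hasDerivAt_id s).smul_const _)).add
    (h₂.smul_const _))).deriv.trans (by simp)

theorem iteratedDeriv_three_momentCurve :
    iteratedDeriv 3 momentCurve = fun _ => single 2 1 := by
  ext1 s
  rw [iteratedDeriv_succ, iteratedDeriv_two_momentCurve]
  exact ((hasDerivAt_const s _).add ((hasDerivAt_id s).smul_const _)).deriv.trans (by simp)

theorem inner_iteratedDeriv_one_momentCurve (s : ℝ) (ξ : EuclideanSpace ℝ (Fin 3)) :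
    ⟪iteratedDeriv 1 momentCurve s, ξ⟫_ℝ = ξ 0 + s * ξ 1 + s ^ 2 / 2 * ξ 2 := by
  simp only [iteratedDeriv_one_momentCurve, inner_add_left, real_inner_smul_left,
    inner_single_left]
  simp

theorem inner_iteratedDeriv_three_momentCurve (s : ℝ) (ξ : EuclideanSpace ℝ (Fin 3)) :
    ⟪iteratedDeriv 3 momentCurve s, ξ⟫_ℝ = ξ 2 := by
  simp [iteratedDeriv_three_momentCurve, inner_single_left]

end MomentCurve

section NearlyVertical

variable {ξ v : EuclideanSpace ℝ (Fin 3)} {δ s : ℝ}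

theorem inner_pos_of_norm_sub_iteratedDeriv_three_momentCurve_le (hξ : ξ ≠ 0)
    (hξ3 : 9 / 10 * ‖ξ‖ ≤ ξ 2) (hδ : δ < 9 / 10)
    (hv : ‖v - iteratedDeriv 3 momentCurve s‖ ≤ δ) : 0 < ⟪v, ξ⟫_ℝ := by
  have hN : 0 < ‖ξ‖ := norm_pos_iff.mpr hξ
  have h := (abs_le.mp (abs_inner_sub_inner_le hv ξ)).1
  rw [inner_iteratedDeriv_three_momentCurve] at h
  nlinarith

theorem inner_pos_of_norm_sub_iteratedDeriv_one_momentCurve_le (hδ : 0 < δ) (hξ : ξ ≠ 0)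
    (hξ3 : 9 / 10 * ‖ξ‖ ≤ ξ 2) (hξ1 : |ξ 0| ≤ 8 * δ * ‖ξ‖) (hξ2 : |ξ 1| ≤ 8 * δ * ‖ξ‖)
    (hs : |s| ≤ 1) (hs' : 36 * √δ ≤ |s|) (hv : ‖v - iteratedDeriv 1 momentCurve s‖ ≤ δ) :
    0 < ⟪v, ξ⟫_ℝ := by
  have hN : 0 < ‖ξ‖ := norm_pos_iff.mpr hξ
  have h := (abs_le.mp (abs_inner_sub_inner_le hv ξ)).1
  rw [inner_iteratedDeriv_one_momentCurve] at h
  have hs2 : 1296 * δ ≤ s ^ 2 := by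
    have := pow_le_pow_left₀ (by positivity) hs' 2
    rw [sq_abs, mul_pow, Real.sq_sqrt hδ.le] at this
    linarith
  have hquad : 1296 * δ * (9 / 10 * ‖ξ‖) ≤ s ^ 2 * ξ 2 :=
    mul_le_mul hs2 hξ3 (by positivity) (sq_nonneg s)
  have hlin : |s * ξ 1| ≤ 8 * δ * ‖ξ‖ := by
    rw [abs_mul]
    nlinarith [abs_nonneg s, abs_nonneg (ξ 1)]
  nlinarith [(abs_le.mp hξ1).1, (abs_le.mp hlin).1, mul_pos hδ hN]

end NearlyVertical

theorem statement6_general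
    (δ₀ : ℝ) (hδ₀pos : 0 < δ₀) (hδ₀small : δ₀ ≤ (10 : ℝ) ^ (-(10 : ℤ)))
    (γ : ℝ → EuclideanSpace ℝ (Fin 3)) (hγ : ContDiff ℝ (⊤ : ℕ∞) γ)
    (hγclose : ∀ j : ℕ, 1 ≤ j → j ≤ 4 → ∀ s ∈ Set.Icc (-1 : ℝ) 1,
      ‖iteratedDeriv j γ s - iteratedDeriv j momentCurve s‖ ≤ δ₀)
    (ξ : EuclideanSpace ℝ (Fin 3)) (hξ : ξ ≠ 0)
    (hξ3 : (9 / 10) * ‖ξ‖ ≤ ξ 2)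
    (hξ1 : |ξ 0| ≤ 8 * δ₀ * ‖ξ‖) (hξ2 : |ξ 1| ≤ 8 * δ₀ * ‖ξ‖)
    (θ₂ : ℝ) (hθ₂mem : θ₂ ∈ Set.Icc (-1 : ℝ) 1)
    (hθ₂ : ⟪iteratedDeriv 2 γ θ₂, ξ⟫_ℝ = 0) :
    (0 < ⟪iteratedDeriv 1 γ θ₂, ξ⟫_ℝ →
      ∀ s ∈ Set.Icc (-1 : ℝ) 1, ⟪iteratedDeriv 1 γ s, ξ⟫_ℝ ≠ 0) ∧
    (⟪iteratedDeriv 1 γ θ₂, ξ⟫_ℝ = 0 →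
      ∀ s ∈ Set.Icc (-1 : ℝ) 1, (⟪iteratedDeriv 1 γ s, ξ⟫_ℝ = 0 ↔ s = θ₂)) ∧
    (⟪iteratedDeriv 1 γ θ₂, ξ⟫_ℝ < 0 →
      ∃ s₁ s₂ : ℝ, s₁ ∈ Set.Icc (-1 : ℝ) 1 ∧ s₂ ∈ Set.Icc (-1 : ℝ) 1 ∧ s₁ ≠ s₂ ∧
        ⟪iteratedDeriv 1 γ s₁, ξ⟫_ℝ = 0 ∧ ⟪iteratedDeriv 1 γ s₂, ξ⟫_ℝ = 0 ∧
        |s₁| ≤ 36 * Real.sqrt δ₀ ∧ |s₂| ≤ 36 * Real.sqrt δ₀ ∧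
        ∀ s ∈ Set.Icc (-1 : ℝ) 1, ⟪iteratedDeriv 1 γ s, ξ⟫_ℝ = 0 → s = s₁ ∨ s = s₂) := by
  have hδ₀ : δ₀ ≤ 1 / 10 ^ 10 := by simpa [zpow_neg] using hδ₀small
  have hderiv (k : ℕ) (s : ℝ) := hasDerivAt_inner_iteratedDeriv hγ (k := k)
    (by exact_mod_cast ENat.natCast_lt_top k) ξ s
  have hincr : StrictMonoOn (fun s => ⟪iteratedDeriv 2 γ s, ξ⟫_ℝ) (Icc (-1) 1) :=
    strictMonoOn_of_hasDerivWithinAt_pos (convex_Icc _ _)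
      (fun s _ => (hderiv 2 s).continuousAt.continuousWithinAt)
      (fun s _ => (hderiv 2 s).hasDerivWithinAt) fun s hs =>
        inner_pos_of_norm_sub_iteratedDeriv_three_momentCurve_le hξ hξ3 (by linarith)
          (hγclose 3 (by norm_num) (by norm_num) s (interior_subset hs))
  obtain ⟨hanti, hmono⟩ :=
    strictAntiOn_strictMonoOn_of_hasDerivAt (fun s _ => hderiv 1 s) hincr hθ₂mem hθ₂
  have hmin {s} (hs : s ∈ Icc (-1 : ℝ) 1) (hne : s ≠ θ₂) :=
    lt_apply_of_strictAntiOn_of_strictMonoOn hanti hmono hθ₂mem hs hne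
  refine ⟨fun hu s hs => ?_, fun hu s hs => ⟨fun h0 => ?_, fun h => h ▸ hu⟩, fun hu => ?_⟩
  · rcases eq_or_ne s θ₂ with rfl | hne
    · exact hu.ne'
    · exact (hu.trans (hmin hs hne)).ne'
  · by_contra hne
    exact (hmin hs hne).ne (hu.trans h0.symm)
  set r := 36 * √δ₀
  have hr1 : r ≤ 1 := by nlinarith [Real.sq_sqrt hδ₀pos.le, Real.sqrt_nonneg δ₀]
  have hpos {s} (hs : s ∈ Icc (-1 : ℝ) 1) (hrs : r ≤ |s|) : 0 < ⟪iteratedDeriv 1 γ s, ξ⟫_ℝ :=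
    inner_pos_of_norm_sub_iteratedDeriv_one_momentCurve_le hδ₀pos hξ hξ3 hξ1 hξ2
      (abs_le.mpr hs) hrs (hγclose 1 le_rfl (by norm_num) s hs)
  obtain ⟨hθl, hθr⟩ := abs_lt.mp (not_le.mp fun h => (hpos hθ₂mem h).not_gt hu)
  obtain ⟨s₁, hs₁, s₂, hs₂, hne, h₁, h₂, hzeros⟩ :=
    exists_two_zeros_of_strictAntiOn_of_strictMonoOn hanti hmono
      (fun s _ => (hderiv 1 s).continuousAt.continuousWithinAt) (p := -r) (q := r)
      ⟨by linarith, hθl.le⟩ ⟨hθr.le, hr1⟩ hu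
      (hpos ⟨by linarith, by linarith [hθl, hθr]⟩ (by simp [abs_of_nonneg, r]))
      (hpos ⟨by linarith [hθl, hθr], hr1⟩ (by simp [abs_of_nonneg, r]))
  exact ⟨s₁, s₂, ⟨by linarith [hs₁.1], hs₁.2.trans hθ₂mem.2⟩,
    ⟨hθ₂mem.1.trans hs₂.1, by linarith [hs₂.2]⟩, hne, h₁, h₂,
    abs_le.mpr ⟨hs₁.1, by linarith [hs₁.2]⟩, abs_le.mpr ⟨by linarith [hs₂.1], hs₂.2⟩, hzeros⟩

theorem statement6
    (δ₀ : ℝ) (hδ₀pos : 0 < δ₀) (hδ₀small : δ₀ ≤ (10 : ℝ) ^ (-(10 : ℤ)))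
    (γ : ℝ → EuclideanSpace ℝ (Fin 3)) (hγ : ContDiff ℝ (⊤ : ℕ∞) γ)
    (hγ0 : γ 0 = 0)
    (hγder : ∀ j : Fin 3, iteratedDeriv ((j : ℕ) + 1) γ 0 = EuclideanSpace.single j 1)
    (hγclose : ∀ j : ℕ, 1 ≤ j → j ≤ 4 → ∀ s ∈ Set.Icc (-1 : ℝ) 1,
      ‖iteratedDeriv j γ s - iteratedDeriv j momentCurve s‖ ≤ δ₀)
    (ξ : EuclideanSpace ℝ (Fin 3)) (hξ : ξ ≠ 0)
    (hξ3 : (9 / 10) * ‖ξ‖ ≤ ξ 2)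
    (hξ1 : |ξ 0| ≤ 8 * δ₀ * ‖ξ‖) (hξ2 : |ξ 1| ≤ 8 * δ₀ * ‖ξ‖)
    (θ₂ : ℝ) (hθ₂mem : θ₂ ∈ Set.Icc (-1 : ℝ) 1)
    (hθ₂ : ⟪iteratedDeriv 2 γ θ₂, ξ⟫_ℝ = 0) :
    (0 < ⟪iteratedDeriv 1 γ θ₂, ξ⟫_ℝ →
      ∀ s ∈ Set.Icc (-1 : ℝ) 1, ⟪iteratedDeriv 1 γ s, ξ⟫_ℝ ≠ 0) ∧
    (⟪iteratedDeriv 1 γ θ₂, ξ⟫_ℝ = 0 →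
      ∀ s ∈ Set.Icc (-1 : ℝ) 1, (⟪iteratedDeriv 1 γ s, ξ⟫_ℝ = 0 ↔ s = θ₂)) ∧
    (⟪iteratedDeriv 1 γ θ₂, ξ⟫_ℝ < 0 →
      ∃ s₁ s₂ : ℝ, s₁ ∈ Set.Icc (-1 : ℝ) 1 ∧ s₂ ∈ Set.Icc (-1 : ℝ) 1 ∧ s₁ ≠ s₂ ∧
        ⟪iteratedDeriv 1 γ s₁, ξ⟫_ℝ = 0 ∧ ⟪iteratedDeriv 1 γ s₂, ξ⟫_ℝ = 0 ∧
        |s₁| ≤ 36 * Real.sqrt δ₀ ∧ |s₂| ≤ 36 * Real.sqrt δ₀ ∧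
        ∀ s ∈ Set.Icc (-1 : ℝ) 1, ⟪iteratedDeriv 1 γ s, ξ⟫_ℝ = 0 → s = s₁ ∨ s = s₂) :=
  statement6_general δ₀ hδ₀pos hδ₀small γ hγ hγclose ξ hξ hξ3 hξ1 hξ2 θ₂ hθ₂mem hθ₂
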